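/- If every left R-module is a direct sum of virtually simple modules, then R is a semisimple ring. -/

import Mathlib

def VirtuallySimple (R : Type*) [Ring R] (M : Type*) [AddCommGroup M] [Module R M] : Prop :=
  Nontrivial M ∧ ∀ N : Submodule R M, N ≠ ⊥ → Nonempty (N ≃ₗ[R] M)

/-!
A virtually simple module is Noetherian and uniform. If a virtually simple `V` had a proper
nonzero submodule `N`, let `φ` embed `V` onto `N`: the direct limit of `V →φ V →φ ⋯` is then a
uniform module that is the union of a strictly increasing chain of copies of `V`. Being uniform,
its decomposition into virtually simple modules has a single summand, so it is itself virtually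
simple, hence Noetherian, which the chain forbids. Thus virtually simple modules are simple, and
the decomposition of `R` exhibits it as a sum of simple modules.
-/

open Function

def IsUniformModule (R M : Type*) [Ring R] [AddCommGroup M] [Module R M] : Prop :=
  ∀ A B : Submodule R M, A ≠ ⊥ → B ≠ ⊥ → A ⊓ B ≠ ⊥

section

variable {R M N : Type*} [Ring R] [AddCommGroup M] [Module R M] [AddCommGroup N] [Module R N]

theorem VirtuallySimple.congr (hM : VirtuallySimple R M) (e : M ≃ₗ[R] N) :
    VirtuallySimple R N := by
  obtain ⟨_, hiso⟩ := hM
  refine ⟨e.symm.toEquiv.nontrivial, fun B hB => ?_⟩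
  have hB' : B.map (e.symm : N →ₗ[R] M) ≠ ⊥ := by
    rwa [Ne, Submodule.map_eq_bot_iff]
  obtain ⟨e'⟩ := hiso _ hB'
  exact ⟨(e.symm.submoduleMap B).trans (e'.trans e)⟩

theorem Submodule.ne_bot_of_virtuallySimple {W : Submodule R M} (hW : VirtuallySimple R W) :
    W ≠ ⊥ :=
  (Submodule.nontrivial_iff_ne_bot).1 hW.1

theorem VirtuallySimple.isNoetherian (hM : VirtuallySimple R M) : IsNoetherian R M := by
  obtain ⟨_, hiso⟩ := hM
  obtain ⟨x, hx⟩ := exists_ne (0 : M)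
  -- `M` is isomorphic to the cyclic module `R x`, and so is each nonzero submodule of `M`.
  obtain ⟨e⟩ := hiso (R ∙ x) (by rwa [Ne, Submodule.span_singleton_eq_bot])
  have : Module.Finite R M := .equiv e
  refine ⟨fun B => ?_⟩
  obtain rfl | hB := eq_or_ne B ⊥
  · exact Submodule.fg_bot
  · obtain ⟨e'⟩ := hiso B hB
    exact Module.Finite.iff_fg.1 (.equiv e'.symm)

theorem VirtuallySimple.isUniformModule (hM : VirtuallySimple R M) : IsUniformModule R M := by
  intro A B hA hB hAB
  obtain ⟨e⟩ := hM.2 A hA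
  -- `M × B ≃ A × B ≅ A ⊕ B ↪ M` is impossible for a Noetherian `M` unless `B = 0`.
  have hinj : Injective (A.subtype.coprod B.subtype) := by
    rw [← LinearMap.ker_eq_bot, LinearMap.ker_coprod_of_disjoint_range _ _
      (by simpa [disjoint_iff] using hAB)]
    simp
  have := hM.isNoetherian
  have := IsNoetherian.subsingleton_of_prod_injective
    ((A.subtype.coprod B.subtype) ∘ₗ (e.symm.prodCongr (.refl R B)).toLinearMap)
    (hinj.comp (e.symm.prodCongr (.refl R B)).injective)
  exact hB (Submodule.subsingleton_iff_eq_bot.1 this)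

end

section

variable {R M : Type*} [Ring R] [AddCommGroup M] [Module R M]

theorem IsUniformModule.of_directed {ι : Type*} [Nonempty ι] {P : ι → Submodule R M}
    (hdir : Directed (· ≤ ·) P) (hsup : ⨆ i, P i = ⊤) (hP : ∀ i, IsUniformModule R (P i)) :
    IsUniformModule R M := by
  intro A B hA hB hAB
  obtain ⟨x, hxA, hx⟩ := (Submodule.ne_bot_iff A).1 hA
  obtain ⟨y, hyB, hy⟩ := (Submodule.ne_bot_iff B).1 hB
  have hcover (z : M) : ∃ i, z ∈ P i :=
    (Submodule.mem_iSup_of_directed P hdir).1 (hsup ▸ Submodule.mem_top)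
  obtain ⟨i, hxi⟩ := hcover x
  obtain ⟨j, hyj⟩ := hcover y
  obtain ⟨k, hik, hjk⟩ := hdir i j
  refine hP k (A.comap (P k).subtype) (B.comap (P k).subtype) ?_ ?_ ?_
  · exact (Submodule.ne_bot_iff _).2 ⟨⟨x, hik hxi⟩, hxA, by simpa using hx⟩
  · exact (Submodule.ne_bot_iff _).2 ⟨⟨y, hjk hyj⟩, hyB, by simpa using hy⟩
  · rw [← Submodule.comap_inf, hAB, Submodule.comap_bot, Submodule.ker_subtype]

theorem IsUniformModule.virtuallySimple_of_iSupIndep [Nontrivial M] (hM : IsUniformModule R M)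
    {ι : Type*} {W : ι → Submodule R M} (hind : iSupIndep W) (hsup : ⨆ i, W i = ⊤)
    (hW : ∀ i, VirtuallySimple R (W i)) : VirtuallySimple R M := by
  obtain ⟨i⟩ : Nonempty ι := by
    by_contra hι
    rw [not_nonempty_iff] at hι
    exact bot_ne_top (iSup_of_empty W ▸ hsup)
  have hWi : W i = ⊤ := by
    refine top_unique (hsup ▸ iSup_le fun j => ?_)
    obtain rfl | hji := eq_or_ne j i
    · rfl
    · exact absurd (hind.pairwiseDisjoint hji).eq_bot
        (hM _ _ (Submodule.ne_bot_of_virtuallySimple (hW j))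
          (Submodule.ne_bot_of_virtuallySimple (hW i)))
  exact (hW i).congr (LinearEquiv.ofTop _ hWi)

end

section

variable {R V : Type*} [Ring R] [AddCommGroup V] [Module R V] (φ : Module.End R V)

def iterateSystem (i j : ℕ) (_ : i ≤ j) : V →ₗ[R] V := φ ^ (j - i)

instance : DirectedSystem (fun _ : ℕ => V) (iterateSystem φ · · ·) where
  map_self i x := by simp [iterateSystem]
  map_map {i j k} hij hjk x := by
    simp only [iterateSystem, ← Module.End.mul_apply, ← pow_add, tsub_add_tsub_cancel hjk hij]

abbrev IterateLimit : Type _ := Module.DirectLimit (fun _ : ℕ => V) (iterateSystem φ)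

namespace IterateLimit

noncomputable abbrev of (n : ℕ) : V →ₗ[R] IterateLimit φ :=
  Module.DirectLimit.of R ℕ _ (iterateSystem φ) n

theorem of_succ_comp (n : ℕ) : of φ (n + 1) ∘ₗ φ = of φ n := by
  ext x
  simpa [iterateSystem] using Module.DirectLimit.of_f (G := fun _ : ℕ => V)
    (f := iterateSystem φ) (hij := n.le_succ) (x := x)

variable {φ}

theorem of_injective (hφ : Injective φ) (n : ℕ) : Injective (of φ n) := by
  intro x y hxy
  obtain ⟨j, _, h⟩ := Module.DirectLimit.exists_eq_of_of_eq hxy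
  exact Module.End.iterate_injective hφ (j - n) h

theorem iSup_range_of : ⨆ n, LinearMap.range (of φ n) = ⊤ := by
  refine Submodule.eq_top_iff'.2 fun z => ?_
  obtain ⟨n, x, rfl⟩ := Module.DirectLimit.exists_of z
  exact Submodule.mem_iSup_of_mem n (LinearMap.mem_range_self _ x)

theorem range_of_monotone : Monotone fun n => LinearMap.range (of φ n) :=
  monotone_nat_of_le_succ fun n => of_succ_comp φ n ▸ LinearMap.range_comp_le_range _ _

theorem range_of_strictMono (hφ : Injective φ) (hφ' : ¬ Surjective φ) :
    StrictMono fun n => LinearMap.range (of φ n) := by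
  refine strictMono_nat_of_lt_succ fun n => ?_
  rw [← of_succ_comp, LinearMap.range_comp, LinearMap.range_eq_map (of φ (n + 1))]
  exact Submodule.map_strictMono_of_injective (of_injective hφ _)
    (lt_top_iff_ne_top.2 (mt LinearMap.range_eq_top.1 hφ'))

theorem not_isNoetherian (hφ : Injective φ) (hφ' : ¬ Surjective φ) :
    ¬ IsNoetherian R (IterateLimit φ) := fun _ =>
  not_strictMono_of_wellFoundedGT _ (range_of_strictMono hφ hφ')

theorem isUniformModule (hV : VirtuallySimple R V) (hφ : Injective φ) :
    IsUniformModule R (IterateLimit φ) :=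
  .of_directed range_of_monotone.directed_le iSup_range_of fun n =>
    (hV.congr (LinearEquiv.ofInjective _ (of_injective hφ n))).isUniformModule

end IterateLimit

end

universe u

theorem VirtuallySimple.isSimpleModule {R V : Type u} [Ring R] [AddCommGroup V] [Module R V]
    (h : ∀ (M : Type u) [AddCommGroup M] [Module R M],
      ∃ (ι : Type u) (W : ι → Submodule R M), iSupIndep W ∧ iSup W = ⊤ ∧
        ∀ i, VirtuallySimple R (W i))
    (hV : VirtuallySimple R V) : IsSimpleModule R V := by
  have := hV.1
  refine (isSimpleModule_iff R V).2 <| .of_forall_eq_top fun N hN => by_contra fun hNtop => ?_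
  obtain ⟨e⟩ := hV.2 N hN
  set φ : Module.End R V := N.subtype ∘ₗ e.symm.toLinearMap
  have hφ : Injective φ := N.injective_subtype.comp e.symm.injective
  have hφ' : ¬ Surjective φ := by
    rwa [← LinearMap.range_eq_top, LinearMap.range_comp, LinearEquiv.range, Submodule.map_top,
      Submodule.range_subtype]
  have := (IterateLimit.of_injective hφ 0).nontrivial
  obtain ⟨ι, W, hind, hsup, hW⟩ := h (IterateLimit φ)
  exact IterateLimit.not_isNoetherian hφ hφ'
    ((IterateLimit.isUniformModule hV hφ).virtuallySimple_of_iSupIndep hind hsup hW).isNoetherian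

/-- If every left `R`-module is a direct sum of virtually simple modules,
then `R` is a semisimple ring. -/
theorem stmt2 (R : Type u) [Ring R]
    (h : ∀ (M : Type u) [AddCommGroup M] [Module R M],
      ∃ (ι : Type u) (V : ι → Submodule R M), iSupIndep V ∧ iSup V = ⊤ ∧
        ∀ i, VirtuallySimple R (V i)) :
    IsSemisimpleRing R := by
  obtain ⟨ι, V, -, hsup, hV⟩ := h R
  have (i : ι) : IsSimpleModule R (V i) := (hV i).isSimpleModule h
  exact isSemisimpleModule_of_isSemisimpleModule_submodule' (fun _ => inferInstance) hsup
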